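/- Every continuous function f on [a,b] is RDS integrable with respect to every α of bounded variation on [a,b]. -/

import Mathlib

open Set Filter Topology
open scoped Classical

noncomputable section

/-- A partition `a = x 0 < x 1 < ... < x n = b` of `[a,b]`. -/
structure RDSPartition (a b : ℝ) where
  n : ℕ
  x : ℕ → ℝ
  mono : ∀ i, i < n → x i < x (i + 1)
  first : x 0 = a
  last : x n = b

/-- Right limit `α(t+)`, with the convention `α(b+) = α(b)` at the right endpoint. -/
def rLim (b : ℝ) (α : ℝ → ℝ) (t : ℝ) : ℝ :=
  if t < b then Function.rightLim α t else α t

/-- Left limit `α(t-)`, with the convention `α(a-) = α(a)` at the left endpoint. -/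
def lLim (a : ℝ) (α : ℝ → ℝ) (t : ℝ) : ℝ :=
  if a < t then Function.leftLim α t else α t

/-- `α`-length of the singleton `{t}` inside `[a,b]`: `α(t+) - α(t-)`. -/
def muPt (a b : ℝ) (α : ℝ → ℝ) (t : ℝ) : ℝ :=
  rLim b α t - lLim a α t

/-- `α`-length of the open interval `(c,d)` inside `[a,b]`: `α(d-) - α(c+)`. -/
def muIoo (a b : ℝ) (α : ℝ → ℝ) (c d : ℝ) : ℝ :=
  lLim a α d - rLim b α c

/-- `f` is a step function with respect to the partition `P`: it is constant on each
open subinterval `(x (i-1), x i)` of `P`. -/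
def IsStepOn (a b : ℝ) (f : ℝ → ℝ) (P : RDSPartition a b) : Prop :=
  ∀ i, i < P.n → ∀ s ∈ Set.Ioo (P.x i) (P.x (i + 1)),
    f s = f ((P.x i + P.x (i + 1)) / 2)

/-- The RDS integral of a step function with respect to the partition `P`:
`Σ_{i=0}^n f(x_i) μ_α({x_i}) + Σ_{i=1}^n c_i μ_α(I_i)`. -/
def stepInt (a b : ℝ) (α : ℝ → ℝ) (P : RDSPartition a b) (f : ℝ → ℝ) : ℝ :=
  (∑ i ∈ Finset.range (P.n + 1), f (P.x i) * muPt a b α (P.x i)) +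
    ∑ i ∈ Finset.range P.n,
      f ((P.x i + P.x (i + 1)) / 2) * muIoo a b α (P.x i) (P.x (i + 1))

/-- Upper envelope: infimum of RDS step integrals of step functions above `f` on `[a,b]`. -/
def upperRDS (a b : ℝ) (α f : ℝ → ℝ) : ℝ :=
  sInf { r | ∃ (u : ℝ → ℝ) (P : RDSPartition a b), IsStepOn a b u P ∧
    (∀ t ∈ Set.Icc a b, f t ≤ u t) ∧ r = stepInt a b α P u }

/-- Lower envelope: supremum of RDS step integrals of step functions below `f` on `[a,b]`. -/
def lowerRDS (a b : ℝ) (α f : ℝ → ℝ) : ℝ :=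
  sSup { r | ∃ (v : ℝ → ℝ) (P : RDSPartition a b), IsStepOn a b v P ∧
    (∀ t ∈ Set.Icc a b, v t ≤ f t) ∧ r = stepInt a b α P v }

/-- RDS integrability with respect to an increasing integrator. -/
def RDSIntegrableInc (a b : ℝ) (α f : ℝ → ℝ) : Prop :=
  lowerRDS a b α f = upperRDS a b α f

/-- The RDS integral with respect to an increasing integrator. -/
def RDSIntegralInc (a b : ℝ) (α f : ℝ → ℝ) : ℝ := upperRDS a b α f

/-- RDS integrability with respect to a BV integrator: some Jordan decomposition
into increasing functions works. -/
def RDSIntegrable (a b : ℝ) (α f : ℝ → ℝ) : Prop :=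
  ∃ αp αm : ℝ → ℝ, MonotoneOn αp (Set.Icc a b) ∧ MonotoneOn αm (Set.Icc a b) ∧
    (∀ t ∈ Set.Icc a b, α t = αp t - αm t) ∧
    RDSIntegrableInc a b αp f ∧ RDSIntegrableInc a b αm f

/-- The RDS integral with respect to a BV integrator. -/
def RDSIntegral (a b : ℝ) (α f : ℝ → ℝ) : ℝ :=
  if h : RDSIntegrable a b α f then
    RDSIntegralInc a b h.choose f - RDSIntegralInc a b h.choose_spec.choose f
  else 0

/-- `f` is bounded on `[a,b]`. -/
def BddOn (a b : ℝ) (f : ℝ → ℝ) : Prop :=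
  ∃ M : ℝ, ∀ t ∈ Set.Icc a b, |f t| ≤ M

end


/-! A continuous `f` is squeezed between the step functions `w ± ε`, where `w` samples `f` at the
midpoints of a fine partition. For an increasing integrator, made constant outside `[a,b]`, the
step integral of a step function is its Lebesgue–Stieltjes integral over `[a,b]`, which gives
lower ≤ upper; the step integrals of `w + ε` and `w - ε` differ by `2ε(α b - α a)`, which gives
upper ≤ lower. A Jordan decomposition reduces the BV case to the increasing one. -/

open Function MeasureTheory

theorem csSup_eq_csInf_of_forall_exists_le_add {K : Type*} [Field K]
    [ConditionallyCompleteLinearOrder K] [IsStrictOrderedRing K] {L U : Set K}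
    (hLU : ∀ r ∈ L, ∀ s ∈ U, r ≤ s) (h : ∀ ε > 0, ∃ r ∈ L, ∃ s ∈ U, s ≤ r + ε) :
    sSup L = sInf U := by
  obtain ⟨r, hr, s, hs, -⟩ := h 1 one_pos
  have hL : BddAbove L := ⟨s, fun r' hr' => hLU r' hr' s hs⟩
  have hU : BddBelow U := ⟨r, fun s' hs' => hLU r hr s' hs'⟩
  refine le_antisymm (csSup_le ⟨r, hr⟩ fun r' hr' => le_csInf ⟨s, hs⟩ (hLU r' hr')) ?_
  refine le_of_forall_pos_le_add fun ε hε => ?_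
  obtain ⟨r', hr', s', hs', hle⟩ := h ε hε
  exact (csInf_le hU hs').trans (hle.trans (add_le_add_left (le_csSup hL hr') ε))

theorem MonotoneOn.exists_monotone_eqOn_of_le_left_of_right_le {γ β : Type*} [LinearOrder γ]
    [Preorder β] {a b : γ} {p : γ → β} (hab : a ≤ b) (hp : MonotoneOn p (Icc a b)) :
    ∃ p' : γ → β, Monotone p' ∧ EqOn p' p (Icc a b) ∧ (∀ t ≤ a, p' t = p' a) ∧
      ∀ t, b ≤ t → p' t = p' b := by
  refine ⟨IccExtend hab fun s => p s, Monotone.IccExtend hab fun s t hst => hp s.2 t.2 hst,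
    fun t ht => IccExtend_of_mem hab _ ht, fun t ht => ?_, fun t ht => ?_⟩
  · rw [IccExtend_of_le_left _ _ ht, IccExtend_left]
  · rw [IccExtend_of_right_le _ _ ht, IccExtend_right]

namespace RDSPartition

variable {a b : ℝ} (P : RDSPartition a b)

theorem strictMonoOn_x : StrictMonoOn P.x (Iic P.n) :=
  strictMonoOn_Iic_of_lt_succ P.mono

theorem x_mem_Icc {i : ℕ} (hi : i ≤ P.n) : P.x i ∈ Icc a b := by
  constructor
  · exact P.first.ge.trans (P.strictMonoOn_x.monotoneOn (Nat.zero_le P.n) hi (Nat.zero_le i))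
  · exact (P.strictMonoOn_x.monotoneOn hi (le_refl P.n) hi).trans P.last.le

theorem midpoint_mem_Ioo {i : ℕ} (hi : i < P.n) :
    (P.x i + P.x (i + 1)) / 2 ∈ Ioo (P.x i) (P.x (i + 1)) := by
  have := P.mono i hi
  constructor <;> linarith

theorem Ioo_subset_Icc {i : ℕ} (hi : i < P.n) : Ioo (P.x i) (P.x (i + 1)) ⊆ Icc a b :=
  Ioo_subset_Icc_self.trans (Icc_subset_Icc (P.x_mem_Icc hi.le).1 (P.x_mem_Icc hi).2)

theorem eq_of_mem_Ioo {i j : ℕ} (hi : i < P.n) (hj : j < P.n) {t : ℝ}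
    (hti : t ∈ Ioo (P.x i) (P.x (i + 1))) (htj : t ∈ Ioo (P.x j) (P.x (j + 1))) : i = j := by
  by_contra hne
  wlog hij : i < j generalizing i j
  · exact this hj hi htj hti (Ne.symm hne) (by omega)
  have : P.x (i + 1) ≤ P.x j := P.strictMonoOn_x.monotoneOn hi hj.le hij
  linarith [hti.2, htj.1]

noncomputable def snap (t : ℝ) : ℝ :=
  if h : ∃ i < P.n, t ∈ Ioo (P.x i) (P.x (i + 1)) then
    (P.x h.choose + P.x (h.choose + 1)) / 2
  else t

theorem snap_of_mem_Ioo {i : ℕ} (hi : i < P.n) {t : ℝ} (ht : t ∈ Ioo (P.x i) (P.x (i + 1))) :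
    P.snap t = (P.x i + P.x (i + 1)) / 2 := by
  have h : ∃ i < P.n, t ∈ Ioo (P.x i) (P.x (i + 1)) := ⟨i, hi, ht⟩
  rw [snap, dif_pos h, P.eq_of_mem_Ioo h.choose_spec.1 hi h.choose_spec.2 ht]

theorem isStepOn_comp_snap (g : ℝ → ℝ) : IsStepOn a b (g ∘ P.snap) P := by
  intro i hi s hs
  simp only [comp_apply, P.snap_of_mem_Ioo hi hs, P.snap_of_mem_Ioo hi (P.midpoint_mem_Ioo hi)]

theorem snap_mem_Icc_and_dist_lt {δ : ℝ} (hδ : 0 < δ) (hP : ∀ i < P.n, P.x (i + 1) - P.x i < δ)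
    {t : ℝ} (ht : t ∈ Icc a b) : P.snap t ∈ Icc a b ∧ dist (P.snap t) t < δ := by
  rw [snap]
  split_ifs with h
  · obtain ⟨hi, hti⟩ := h.choose_spec
    refine ⟨P.Ioo_subset_Icc hi (P.midpoint_mem_Ioo hi), ?_⟩
    rw [Real.dist_eq, abs_sub_lt_iff]
    have := hP _ hi
    constructor <;> linarith [hti.1, hti.2]
  · simpa using ⟨ht, hδ⟩

theorem exists_forall_sub_lt (hab : a < b) {δ : ℝ} (hδ : 0 < δ) :
    ∃ P : RDSPartition a b, ∀ i < P.n, P.x (i + 1) - P.x i < δ := by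
  obtain ⟨n, hn⟩ := exists_nat_gt ((b - a) / δ)
  have hn0 : (0 : ℝ) < n := (div_pos (sub_pos.2 hab) hδ).trans hn
  have hh0 : 0 < (b - a) / n := div_pos (sub_pos.2 hab) hn0
  have hhδ : (b - a) / n < δ := by
    rw [div_lt_iff₀ hn0, mul_comm, ← div_lt_iff₀ hδ]; exact hn
  refine ⟨⟨n, fun i => a + i * ((b - a) / n), fun i _ => ?_, by simp, ?_⟩, fun i _ => ?_⟩
  · push_cast; linarith
  · field_simp; ring
  · push_cast; linarith

end RDSPartition

theorem exists_isStepOn_abs_sub_lt {a b : ℝ} (hab : a < b) {f : ℝ → ℝ}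
    (hf : ContinuousOn f (Icc a b)) {ε : ℝ} (hε : 0 < ε) :
    ∃ (P : RDSPartition a b) (w : ℝ → ℝ), IsStepOn a b w P ∧ ∀ t ∈ Icc a b, |w t - f t| < ε := by
  obtain ⟨δ, hδ, hfδ⟩ := Metric.uniformContinuousOn_iff.1
    (isCompact_Icc.uniformContinuousOn_of_continuous hf) ε hε
  obtain ⟨P, hP⟩ := RDSPartition.exists_forall_sub_lt hab hδ
  refine ⟨P, f ∘ P.snap, P.isStepOn_comp_snap f, fun t ht => ?_⟩
  obtain ⟨hmem, hdist⟩ := P.snap_mem_Icc_and_dist_lt hδ hP ht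
  simpa [Real.dist_eq] using hfδ _ hmem _ ht hdist

section StepIntegral

variable {a b : ℝ} {P : RDSPartition a b} {u w : ℝ → ℝ}

theorem IsStepOn.add_const (hw : IsStepOn a b w P) (c : ℝ) :
    IsStepOn a b (fun t => w t + c) P :=
  fun i hi s hs => congrArg (· + c) (hw i hi s hs)

theorem sum_range_sub_add_sum_range_sub {M : Type*} [AddCommGroup M] (r l : ℕ → M) (k : ℕ) :
    ∑ i ∈ Finset.range (k + 1), (r i - l i) + ∑ i ∈ Finset.range k, (l (i + 1) - r i) =
      r k - l 0 := by
  induction k with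
  | zero => simp
  | succ k ih =>
    rw [Finset.sum_range_succ (fun i => r i - l i) (k + 1),
      Finset.sum_range_succ (fun i => l (i + 1) - r i) k, add_add_add_comm, ih]
    abel

/-- The point masses and interval masses of a partition telescope to `α b - α a`, for any `α`,
thanks to the conventions `α(a-) = α a` and `α(b+) = α b`. -/
theorem stepInt_add_const (α : ℝ → ℝ) (c : ℝ) :
    stepInt a b α P (fun t => w t + c) = stepInt a b α P w + c * (α b - α a) := by
  have htotal : ∑ i ∈ Finset.range (P.n + 1), muPt a b α (P.x i) +
      ∑ i ∈ Finset.range P.n, muIoo a b α (P.x i) (P.x (i + 1)) = α b - α a := by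
    have h := sum_range_sub_add_sum_range_sub (fun i => rLim b α (P.x i))
      (fun i => lLim a α (P.x i)) P.n
    rwa [P.last, P.first, rLim, if_neg (lt_irrefl b), lLim, if_neg (lt_irrefl a)] at h
  simp only [stepInt, add_mul, Finset.sum_add_distrib, ← Finset.mul_sum]
  linear_combination c * htotal

variable {μ : Measure ℝ} [IsLocallyFiniteMeasure μ] {c d k : ℝ}

theorem integrableOn_Ioo_of_eqOn (hu : EqOn u (fun _ => k) (Ioo c d)) :
    IntegrableOn u (Ioo c d) μ :=
  (integrableOn_const measure_Ioo_lt_top.ne).congr_fun hu.symm measurableSet_Ioo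

theorem integrableOn_Ioc_of_eqOn_Ioo (hcd : c < d) (hu : EqOn u (fun _ => k) (Ioo c d)) :
    IntegrableOn u (Ioc c d) μ := by
  rw [← Ioo_insert_right hcd, ← union_singleton]
  exact (integrableOn_Ioo_of_eqOn hu).union
    (integrableOn_singleton (hx := isCompact_singleton.measure_lt_top))

theorem setIntegral_Ioc_of_eqOn_Ioo (hcd : c < d) (hu : EqOn u (fun _ => k) (Ioo c d)) :
    ∫ s in Ioc c d, u s ∂μ = k * μ.real (Ioo c d) + u d * μ.real {d} := by
  rw [← Ioo_insert_right hcd, ← union_singleton, setIntegral_union (by simp)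
    (measurableSet_singleton d) (integrableOn_Ioo_of_eqOn hu)
    (integrableOn_singleton (hx := isCompact_singleton.measure_lt_top)),
    setIntegral_congr_fun measurableSet_Ioo hu, setIntegral_const, integral_singleton,
    smul_eq_mul, smul_eq_mul, mul_comm, mul_comm (μ.real {d})]

theorem IsStepOn.integrableOn_and_setIntegral_eq (hu : IsStepOn a b u P) {j : ℕ}
    (hj : j ≤ P.n) :
    IntegrableOn u (Icc a (P.x j)) μ ∧ ∫ t in Icc a (P.x j), u t ∂μ =
      ∑ i ∈ Finset.range (j + 1), u (P.x i) * μ.real {P.x i} +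
        ∑ i ∈ Finset.range j,
          u ((P.x i + P.x (i + 1)) / 2) * μ.real (Ioo (P.x i) (P.x (i + 1))) := by
  induction j with
  | zero =>
    rw [P.first, Icc_self]
    refine ⟨integrableOn_singleton (hx := isCompact_singleton.measure_lt_top), ?_⟩
    simp [measureReal_def, P.first, mul_comm]
  | succ j ih =>
    have hj' : j < P.n := hj
    have hlt := P.mono j hj'
    obtain ⟨hint, hint_eq⟩ := ih hj'.le
    have hpiece : IntegrableOn u (Ioc (P.x j) (P.x (j + 1))) μ :=
      integrableOn_Ioc_of_eqOn_Ioo hlt (hu j hj')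
    rw [← Icc_union_Ioc_eq_Icc (P.x_mem_Icc hj'.le).1 hlt.le]
    refine ⟨hint.union hpiece, ?_⟩
    rw [setIntegral_union ((Iic_disjoint_Ioc le_rfl).mono_left Icc_subset_Iic_self)
      measurableSet_Ioc hint hpiece, hint_eq, setIntegral_Ioc_of_eqOn_Ioo hlt (hu j hj'),
      Finset.sum_range_succ (fun i => u (P.x i) * μ.real {P.x i}) (j + 1),
      Finset.sum_range_succ
        (fun i => u ((P.x i + P.x (i + 1)) / 2) * μ.real (Ioo (P.x i) (P.x (i + 1)))) j]
    ring

end StepIntegral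

section Stieltjes

variable {a b : ℝ} {α : ℝ → ℝ}

theorem rLim_eq_rightLim (hrb : ∀ t, b ≤ t → α t = α b) {t : ℝ} (ht : t ≤ b) :
    rLim b α t = rightLim α t := by
  rcases ht.lt_or_eq with ht | rfl
  · exact if_pos ht
  · refine (if_neg (lt_irrefl t)).trans (rightLim_eq_of_tendsto ?_).symm
    exact tendsto_const_nhds.congr' (eventually_nhdsWithin_of_forall fun s hs => (hrb s hs.le).symm)

theorem lLim_eq_leftLim (hla : ∀ t ≤ a, α t = α a) {t : ℝ} (ht : a ≤ t) :
    lLim a α t = leftLim α t := by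
  rcases ht.lt_or_eq with ht | rfl
  · exact if_pos ht
  · refine (if_neg (lt_irrefl a)).trans (leftLim_eq_of_tendsto ?_).symm
    exact tendsto_const_nhds.congr' (eventually_nhdsWithin_of_forall fun s hs => (hla s hs.le).symm)

variable (hm : Monotone α) (hla : ∀ t ≤ a, α t = α a) (hrb : ∀ t, b ≤ t → α t = α b)
include hm hla hrb

theorem measureReal_singleton_eq_muPt {t : ℝ} (ht : t ∈ Icc a b) :
    hm.stieltjesFunction.measure.real {t} = muPt a b α t := by
  rw [measureReal_def, StieltjesFunction.measure_singleton,
    show ⇑hm.stieltjesFunction = rightLim α from rfl, leftLim_rightLim (hm.tendsto_leftLim t),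
    muPt, rLim_eq_rightLim hrb ht.2, lLim_eq_leftLim hla ht.1,
    ENNReal.toReal_ofReal (sub_nonneg.2 (hm.leftLim_le_rightLim le_rfl))]

theorem measureReal_Ioo_eq_muIoo {c d : ℝ} (hc : c ∈ Icc a b) (hd : d ∈ Icc a b) (hcd : c < d) :
    hm.stieltjesFunction.measure.real (Ioo c d) = muIoo a b α c d := by
  rw [measureReal_def, StieltjesFunction.measure_Ioo,
    show ⇑hm.stieltjesFunction = rightLim α from rfl, leftLim_rightLim (hm.tendsto_leftLim d),
    muIoo, rLim_eq_rightLim hrb hc.2, lLim_eq_leftLim hla hd.1,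
    ENNReal.toReal_ofReal (sub_nonneg.2 (hm.rightLim_le_leftLim hcd))]

theorem IsStepOn.integrableOn_and_stepInt_eq {P : RDSPartition a b} {u : ℝ → ℝ}
    (hu : IsStepOn a b u P) :
    IntegrableOn u (Icc a b) hm.stieltjesFunction.measure ∧
      stepInt a b α P u = ∫ t in Icc a b, u t ∂hm.stieltjesFunction.measure := by
  obtain ⟨hint, hint_eq⟩ := hu.integrableOn_and_setIntegral_eq
    (μ := hm.stieltjesFunction.measure) le_rfl
  rw [P.last] at hint hint_eq
  refine ⟨hint, hint_eq ▸ ?_⟩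
  simp only [stepInt]
  congr 1 <;> refine Finset.sum_congr rfl fun i hi => ?_
  · rw [Finset.mem_range, Nat.lt_succ_iff] at hi
    rw [measureReal_singleton_eq_muPt hm hla hrb (P.x_mem_Icc hi)]
  · rw [Finset.mem_range] at hi
    rw [measureReal_Ioo_eq_muIoo hm hla hrb (P.x_mem_Icc hi.le) (P.x_mem_Icc hi) (P.mono i hi)]

theorem stepInt_le_stepInt {P Q : RDSPartition a b} {u v : ℝ → ℝ} (hv : IsStepOn a b v P)
    (hu : IsStepOn a b u Q) (hvu : ∀ t ∈ Icc a b, v t ≤ u t) :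
    stepInt a b α P v ≤ stepInt a b α Q u := by
  obtain ⟨hvi, hv_eq⟩ := hv.integrableOn_and_stepInt_eq hm hla hrb
  obtain ⟨hui, hu_eq⟩ := hu.integrableOn_and_stepInt_eq hm hla hrb
  rw [hv_eq, hu_eq]
  exact setIntegral_mono_on hvi hui measurableSet_Icc hvu

theorem rdsIntegrableInc_of_continuousOn (hab : a < b) {f : ℝ → ℝ}
    (hf : ContinuousOn f (Icc a b)) : RDSIntegrableInc a b α f := by
  refine csSup_eq_csInf_of_forall_exists_le_add ?_ fun ε hε => ?_
  · rintro _ ⟨v, P, hv, hvf, rfl⟩ _ ⟨u, Q, hu, hfu, rfl⟩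
    exact stepInt_le_stepInt hm hla hrb hv hu fun t ht => (hvf t ht).trans (hfu t ht)
  obtain ⟨η, hη, hηε⟩ : ∃ η > 0, 2 * η * (α b - α a) ≤ ε := by
    set C := α b - α a
    have hC : 0 ≤ C := sub_nonneg.2 (hm hab.le)
    refine ⟨ε / (2 * C + 1), by positivity, ?_⟩
    rw [show 2 * (ε / (2 * C + 1)) * C = ε * (2 * C / (2 * C + 1)) by ring]
    exact mul_le_of_le_one_right hε.le (div_le_one_of_le₀ (by linarith) (by positivity))
  obtain ⟨P, w, hw, hwf⟩ := exists_isStepOn_abs_sub_lt hab hf hη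
  refine ⟨_, ⟨_, P, hw.add_const (-η), fun t ht => ?_, rfl⟩,
    _, ⟨_, P, hw.add_const η, fun t ht => ?_, rfl⟩, ?_⟩
  · linarith [(abs_sub_lt_iff.1 (hwf t ht)).1]
  · linarith [(abs_sub_lt_iff.1 (hwf t ht)).2]
  · rw [stepInt_add_const, stepInt_add_const]
    linarith

end Stieltjes

theorem stmt15 (a b : ℝ) (hab : a < b) (α f : ℝ → ℝ)
    (hf : ContinuousOn f (Set.Icc a b)) (hα : BoundedVariationOn α (Set.Icc a b)) :
    RDSIntegrable a b α f := by
  obtain ⟨p, q, hp, hq, rfl⟩ := hα.locallyBoundedVariationOn.exists_monotoneOn_sub_monotoneOn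
  obtain ⟨p', hp'm, hp'p, hp'a, hp'b⟩ := hp.exists_monotone_eqOn_of_le_left_of_right_le hab.le
  obtain ⟨q', hq'm, hq'q, hq'a, hq'b⟩ := hq.exists_monotone_eqOn_of_le_left_of_right_le hab.le
  refine ⟨p', q', hp'm.monotoneOn _, hq'm.monotoneOn _, fun t ht => ?_,
    rdsIntegrableInc_of_continuousOn hp'm hp'a hp'b hab hf,
    rdsIntegrableInc_of_continuousOn hq'm hq'a hq'b hab hf⟩
  rw [Pi.sub_apply, hp'p ht, hq'q ht]
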